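/- arXiv:1905.01036 — 3 statements merged into one kernel-verified Lean document; each statement's English description precedes it below -/
import Mathlib

section
/- (Theorem 1: monotonicity of the penalized EM algorithm for finite mixtures of regressions.) Suppose each penalty ρ_j : [0,∞) → ℝ is nondecreasing, concave and differentiable on (0,∞), and continuous at 0. Let θ⁰ = (π⁰, β⁰, σ⁰) be current parameters with π⁰_j > 0, ∑_j π⁰_j = 1, σ⁰_j > 0, and β⁰_{jk} ≠ 0 for all j = 1,…,m and k = 1,…,p, and let r_{ij} = π⁰_j φ(y_i; x_iᵀβ⁰_j, (σ⁰_j)²)/f(y_i|x_i, θ⁰) be the responsibilities, assumed to satisfy ∑_{i=1}^n r_{ij} > 0 for every j. Define updated parameters θ¹ = (π¹, β¹, σ¹) by: π¹_j = (1/n)∑_{i=1}^n r_{ij}; β¹_j ∈ ℝ^{p+1} is any vector satisfying ∑_{i=1}^n r_{ij} log φ(y_i; x_iᵀβ¹_j, (σ⁰_j)²) − ∑_{k=1}^p ρ̃_j(β¹_{jk}; β⁰_{jk}) ≥ ∑_{i=1}^n r_{ij} log φ(y_i; x_iᵀβ⁰_j, (σ⁰_j)²) − ∑_{k=1}^p ρ̃_j(β⁰_{jk};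 β⁰_{jk}); and (σ¹_j)² = ∑_{i=1}^n r_{ij}(y_i − x_iᵀβ¹_j)² / ∑_{i=1}^n r_{ij}, assumed strictly positive for every j. Then the penalized log-likelihood is non-decreasing: ℓ₁(θ¹) ≥ ℓ₁(θ⁰). -/
open scoped BigOperators

/-- The `N(μ, σ²)` density `φ(y; μ, σ²)`. -/
noncomputable def gaussPdf (y μ σ : ℝ) : ℝ :=
  (σ * Real.sqrt (2 * Real.pi))⁻¹ * Real.exp (-((y - μ) ^ 2) / (2 * σ ^ 2))

/-- The mixture-of-linear-regressions density `f(y|x, θ) = ∑ j π_j φ(y; xᵀβ_j, σ_j²)`. -/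
noncomputable def mixDensity {m p : ℕ} (π : Fin m → ℝ)
    (β : Fin m → Fin (p + 1) → ℝ) (σ : Fin m → ℝ)
    (x : Fin (p + 1) → ℝ) (y : ℝ) : ℝ :=
  ∑ j, π j * gaussPdf y (∑ k, x k * β j k) (σ j)

/-- The observed log-likelihood `ℓ_n(θ) = ∑ i log f(y_i|x_i, θ)`. -/
noncomputable def loglik {n m p : ℕ} (x : Fin n → Fin (p + 1) → ℝ) (y : Fin n → ℝ)
    (π : Fin m → ℝ) (β : Fin m → Fin (p + 1) → ℝ) (σ : Fin m → ℝ) : ℝ :=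
  ∑ i, Real.log (mixDensity π β σ (x i) (y i))

/-- The penalized log-likelihood `ℓ₁(θ) = ℓ_n(θ) − ∑ j ∑ k ρ_j(|β_{jk}|)`,
where the penalty is applied to the non-intercept coefficients. -/
noncomputable def penLoglik {n m p : ℕ} (x : Fin n → Fin (p + 1) → ℝ)
    (y : Fin n → ℝ) (ρ : Fin m → ℝ → ℝ)
    (π : Fin m → ℝ) (β : Fin m → Fin (p + 1) → ℝ) (σ : Fin m → ℝ) : ℝ :=
  loglik x y π β σ - ∑ j, ∑ k : Fin p, ρ j |β j k.succ|

/-- The local quadratic approximation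
`ρ̃(b; b₀) = ρ(|b₀|) + (ρ'(|b₀|)/(2|b₀|))(b² − b₀²)`. -/
noncomputable def lqa (ρ : ℝ → ℝ) (b b₀ : ℝ) : ℝ :=
  ρ |b₀| + deriv ρ |b₀| / (2 * |b₀|) * (b ^ 2 - b₀ ^ 2)

section AuxEM
open Set

lemma gaussPdf_pos {y μ σ : ℝ} (hσ : 0 < σ) : 0 < gaussPdf y μ σ := by
  unfold gaussPdf
  have h2π : 0 < Real.sqrt (2 * Real.pi) :=
    Real.sqrt_pos.mpr (by positivity)
  positivity

lemma log_gaussPdf {y μ σ : ℝ} (hσ : 0 < σ) :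
    Real.log (gaussPdf y μ σ) =
      -Real.log (σ * Real.sqrt (2 * Real.pi)) - (y - μ) ^ 2 / (2 * σ ^ 2) := by
  have h2π : 0 < Real.sqrt (2 * Real.pi) := Real.sqrt_pos.mpr (by positivity)
  have h1 : (σ * Real.sqrt (2 * Real.pi))⁻¹ ≠ 0 := by positivity
  unfold gaussPdf
  rw [Real.log_mul h1 (Real.exp_ne_zero _), Real.log_inv, Real.log_exp]
  ring

lemma tangent_concave {ρ : ℝ → ℝ} (hconc : ConcaveOn ℝ (Set.Ioi 0) ρ)
    (hdiff : ∀ s : ℝ, 0 < s → DifferentiableAt ℝ ρ s)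
    {a a₀ : ℝ} (ha : 0 < a) (ha₀ : 0 < a₀) :
    ρ a ≤ ρ a₀ + deriv ρ a₀ * (a - a₀) := by
  rcases lt_trichotomy a a₀ with h | h | h
  · have := hconc.deriv_le_slope (Set.mem_Ioi.mpr ha) (Set.mem_Ioi.mpr ha₀) h (hdiff a₀ ha₀)
    rw [slope_def_field] at this
    have hne : a₀ - a > 0 := by linarith
    rw [le_div_iff₀ hne] at this
    linarith [this]
  · subst h; simp
  · have := hconc.slope_le_deriv (Set.mem_Ioi.mpr ha₀) (Set.mem_Ioi.mpr ha) h (hdiff a₀ ha₀)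
    rw [slope_def_field] at this
    have hne : a - a₀ > 0 := by linarith
    rw [div_le_iff₀ hne] at this
    linarith [this]

lemma deriv_nonneg_aux {ρ : ℝ → ℝ} (hmono : MonotoneOn ρ (Set.Ici 0))
    (hconc : ConcaveOn ℝ (Set.Ioi 0) ρ)
    (hdiff : ∀ s : ℝ, 0 < s → DifferentiableAt ℝ ρ s)
    {a₀ : ℝ} (ha₀ : 0 < a₀) : 0 ≤ deriv ρ a₀ := by
  have hs := hconc.slope_le_deriv (Set.mem_Ioi.mpr ha₀)
    (Set.mem_Ioi.mpr (by linarith : (0:ℝ) < a₀ + 1)) (by linarith) (hdiff a₀ ha₀)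
  rw [slope_def_field] at hs
  have hmle : ρ a₀ ≤ ρ (a₀ + 1) :=
    hmono (Set.mem_Ici.mpr ha₀.le) (Set.mem_Ici.mpr (by linarith)) (by linarith)
  have : (0:ℝ) ≤ (ρ (a₀ + 1) - ρ a₀) / (a₀ + 1 - a₀) := by
    apply div_nonneg <;> linarith
  linarith

lemma kl_aux {m : ℕ} (u v : Fin m → ℝ) (hu : ∀ j, 0 < u j) (hv : ∀ j, 0 < v j)
    (hsum : ∑ j, v j = ∑ j, u j) :
    ∑ j, u j * (Real.log (v j) - Real.log (u j)) ≤ 0 := by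
  have key : ∀ j : Fin m, u j * (Real.log (v j) - Real.log (u j)) ≤ v j - u j := by
    intro j
    have hlog : Real.log (v j / u j) ≤ v j / u j - 1 :=
      Real.log_le_sub_one_of_pos (div_pos (hv j) (hu j))
    rw [Real.log_div (hv j).ne' (hu j).ne'] at hlog
    have := mul_le_mul_of_nonneg_left hlog (hu j).le
    calc u j * (Real.log (v j) - Real.log (u j)) ≤ u j * (v j / u j - 1) := this
      _ = v j - u j := by rw [mul_sub, mul_div_cancel₀ _ (hu j).ne', mul_one]
  calc ∑ j, u j * (Real.log (v j) - Real.log (u j)) ≤ ∑ j, (v j - u j) :=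
        Finset.sum_le_sum fun j _ => key j
    _ = 0 := by rw [Finset.sum_sub_distrib, hsum]; ring

lemma jensen_log {m : ℕ} (w t : Fin m → ℝ) (hw : ∀ j, 0 ≤ w j) (hw1 : ∑ j, w j = 1)
    (ht : ∀ j, 0 < t j) :
    ∑ j, w j * Real.log (t j) ≤ Real.log (∑ j, w j * t j) := by
  have := (strictConcaveOn_log_Ioi.concaveOn).le_map_sum
    (t := Finset.univ) (w := w) (p := t) (fun j _ => hw j) hw1
    (fun j _ => Set.mem_Ioi.mpr (ht j))
  simpa [smul_eq_mul] using this

lemma sigma_opt {σ0 σ1 R S : ℝ} (hσ0 : 0 < σ0) (hσ1 : 0 < σ1) (hR : 0 < R)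
    (hS : σ1 ^ 2 = S / R) :
    -(R * Real.log (σ0 * Real.sqrt (2 * Real.pi))) - S / (2 * σ0 ^ 2) ≤
      -(R * Real.log (σ1 * Real.sqrt (2 * Real.pi))) - S / (2 * σ1 ^ 2) := by
  have hc : 0 < Real.sqrt (2 * Real.pi) := Real.sqrt_pos.mpr (by positivity)
  have hSval : S = R * σ1 ^ 2 := by
    rw [eq_div_iff hR.ne'] at hS; linarith
  have ht : 0 < σ1 ^ 2 / σ0 ^ 2 := by positivity
  have hlog : Real.log (σ1 ^ 2 / σ0 ^ 2) ≤ σ1 ^ 2 / σ0 ^ 2 - 1 :=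
    Real.log_le_sub_one_of_pos ht
  have hlogexp : Real.log (σ1 ^ 2 / σ0 ^ 2) = 2 * Real.log σ1 - 2 * Real.log σ0 := by
    rw [Real.log_div (by positivity) (by positivity), Real.log_pow, Real.log_pow]
    push_cast; ring
  rw [hlogexp] at hlog
  have hl0 : Real.log (σ0 * Real.sqrt (2 * Real.pi)) =
      Real.log σ0 + Real.log (Real.sqrt (2 * Real.pi)) := Real.log_mul hσ0.ne' hc.ne'
  have hl1 : Real.log (σ1 * Real.sqrt (2 * Real.pi)) =
      Real.log σ1 + Real.log (Real.sqrt (2 * Real.pi)) := Real.log_mul hσ1.ne' hc.ne'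
  have e1 : S / (2 * σ1 ^ 2) = R / 2 := by
    rw [hSval]; field_simp
  have e2 : S / (2 * σ0 ^ 2) = R * (σ1 ^ 2 / σ0 ^ 2) / 2 := by
    rw [hSval]; field_simp
  have key : R * (2 * Real.log σ1 - 2 * Real.log σ0) ≤ R * (σ1 ^ 2 / σ0 ^ 2 - 1) :=
    mul_le_mul_of_nonneg_left hlog hR.le
  rw [hl0, hl1, e1, e2]
  nlinarith [key]

lemma sigma_step {n : ℕ} (r y μ : Fin n → ℝ) (σ0 σ1 : ℝ) (hσ0 : 0 < σ0) (hσ1 : 0 < σ1)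
    (hR : 0 < ∑ i, r i)
    (hS : σ1 ^ 2 = (∑ i, r i * (y i - μ i) ^ 2) / ∑ i, r i) :
    ∑ i, r i * Real.log (gaussPdf (y i) (μ i) σ0) ≤
      ∑ i, r i * Real.log (gaussPdf (y i) (μ i) σ1) := by
  have expand : ∀ σ : ℝ, 0 < σ →
      ∑ i, r i * Real.log (gaussPdf (y i) (μ i) σ) =
        -((∑ i, r i) * Real.log (σ * Real.sqrt (2 * Real.pi))) -
          (∑ i, r i * (y i - μ i) ^ 2) / (2 * σ ^ 2) := by
    intro σ hσ
    rw [Finset.sum_mul, ← Finset.sum_neg_distrib, Finset.sum_div, ← Finset.sum_sub_distrib]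
    apply Finset.sum_congr rfl
    intro i _
    rw [log_gaussPdf hσ]
    ring
  rw [expand σ0 hσ0, expand σ1 hσ1]
  exact sigma_opt hσ0 hσ1 hR hS

lemma rho_le_lqa (ρ : ℝ → ℝ) (hmono : MonotoneOn ρ (Set.Ici 0))
    (hconc : ConcaveOn ℝ (Set.Ioi 0) ρ)
    (hdiff : ∀ s : ℝ, 0 < s → DifferentiableAt ℝ ρ s)
    {b b₀ : ℝ} (hb₀ : b₀ ≠ 0) : ρ |b| ≤ lqa ρ b b₀ := by
  have ha₀ : 0 < |b₀| := abs_pos.mpr hb₀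
  have hd : 0 ≤ deriv ρ |b₀| := deriv_nonneg_aux hmono hconc hdiff ha₀
  have hb2 : b ^ 2 = |b| ^ 2 := (sq_abs b).symm
  have hb02 : b₀ ^ 2 = |b₀| ^ 2 := (sq_abs b₀).symm
  unfold lqa
  rw [hb2, hb02]
  set a := |b| with ha
  set a₀ := |b₀| with ha₀def
  rcases eq_or_lt_of_le (abs_nonneg b) with h0 | hapos
  · have step1 : ρ 0 ≤ ρ (a₀ / 2) :=
      hmono (Set.mem_Ici.mpr le_rfl) (Set.mem_Ici.mpr (by linarith)) (by linarith)
    have step2 : ρ (a₀ / 2) ≤ ρ a₀ + deriv ρ a₀ * (a₀ / 2 - a₀) :=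
      tangent_concave hconc hdiff (by linarith) ha₀
    have h0' : a = 0 := by rw [ha, ← h0]
    rw [h0']
    have heq : deriv ρ a₀ / (2 * a₀) * ((0:ℝ) ^ 2 - a₀ ^ 2) = -(deriv ρ a₀ * a₀) / 2 := by
      field_simp; ring
    rw [heq]
    nlinarith [step1, step2]
  · have step : ρ a ≤ ρ a₀ + deriv ρ a₀ * (a - a₀) :=
      tangent_concave hconc hdiff hapos ha₀
    have quad : a - a₀ ≤ (a ^ 2 - a₀ ^ 2) / (2 * a₀) := by
      rw [le_div_iff₀ (by linarith)]
      nlinarith [sq_nonneg (a - a₀)]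
    have hmain : deriv ρ a₀ * (a - a₀) ≤ deriv ρ a₀ / (2 * a₀) * (a ^ 2 - a₀ ^ 2) := by
      calc deriv ρ a₀ * (a - a₀) ≤ deriv ρ a₀ * ((a ^ 2 - a₀ ^ 2) / (2 * a₀)) :=
            mul_le_mul_of_nonneg_left quad hd
        _ = deriv ρ a₀ / (2 * a₀) * (a ^ 2 - a₀ ^ 2) := by ring
    linarith

lemma lqa_self (ρ : ℝ → ℝ) (b₀ : ℝ) : lqa ρ b₀ b₀ = ρ |b₀| := by
  unfold lqa; ring

end AuxEM

/-- Theorem 1: monotonicity of the penalized EM algorithm for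
finite mixtures of regressions.  One E-step/M-step update
`θ⁰ = (π⁰, β⁰, σ⁰) ↦ θ¹ = (π¹, β¹, σ¹)` does not decrease the penalized
log-likelihood: `ℓ₁(θ¹) ≥ ℓ₁(θ⁰)`. -/
theorem penalized_em_monotone
    (n m p : ℕ) (hn : 0 < n) (hm : 0 < m) (hp : 0 < p)
    (x : Fin n → Fin (p + 1) → ℝ) (y : Fin n → ℝ)
    -- penalties: nondecreasing, concave and differentiable on (0,∞),
    -- continuous at 0
    (ρ : Fin m → ℝ → ℝ)
    (hρmono : ∀ j, MonotoneOn (ρ j) (Set.Ici (0:ℝ)))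
    (hρconc : ∀ j, ConcaveOn ℝ (Set.Ioi (0:ℝ)) (ρ j))
    (hρdiff : ∀ j, ∀ s : ℝ, 0 < s → DifferentiableAt ℝ (ρ j) s)
    (hρcont : ∀ j, ContinuousWithinAt (ρ j) (Set.Ici (0:ℝ)) 0)
    -- current parameters θ⁰
    (π0 : Fin m → ℝ) (β0 : Fin m → Fin (p + 1) → ℝ) (σ0 : Fin m → ℝ)
    (hπ0 : ∀ j, 0 < π0 j) (hπ0sum : ∑ j, π0 j = 1) (hσ0 : ∀ j, 0 < σ0 j)
    (hβ0 : ∀ j, ∀ k : Fin p, β0 j k.succ ≠ 0)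
    -- E-step: responsibilities
    (r : Fin n → Fin m → ℝ)
    (hr : ∀ i j, r i j =
      π0 j * gaussPdf (y i) (∑ k, x i k * β0 j k) (σ0 j) /
        mixDensity π0 β0 σ0 (x i) (y i))
    (hrpos : ∀ j, 0 < ∑ i, r i j)
    -- M-step: proportion update
    (π1 : Fin m → ℝ) (hπ1 : ∀ j, π1 j = (∑ i, r i j) / n)
    -- M-step: coefficient update (any improvement of the penalized
    -- weighted Gaussian log-likelihood with LQA penalty)
    (β1 : Fin m → Fin (p + 1) → ℝ)
    (hβ1 : ∀ j,
      ∑ i, r i j * Real.log (gaussPdf (y i) (∑ k, x i k * β1 j k) (σ0 j)) -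
          ∑ k : Fin p, lqa (ρ j) (β1 j k.succ) (β0 j k.succ) ≥
        ∑ i, r i j * Real.log (gaussPdf (y i) (∑ k, x i k * β0 j k) (σ0 j)) -
          ∑ k : Fin p, lqa (ρ j) (β0 j k.succ) (β0 j k.succ))
    -- M-step: variance update, assumed strictly positive
    (σ1 : Fin m → ℝ) (hσ1pos : ∀ j, 0 < σ1 j)
    (hσ1 : ∀ j, σ1 j ^ 2 =
      (∑ i, r i j * (y i - ∑ k, x i k * β1 j k) ^ 2) / ∑ i, r i j) :
    penLoglik x y ρ π1 β1 σ1 ≥ penLoglik x y ρ π0 β0 σ0 := by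

  have hm' : Nonempty (Fin m) := ⟨⟨0, hm⟩⟩
  have hnpos : (0:ℝ) < n := Nat.cast_pos.mpr hn
  have hf0pos : ∀ i, 0 < mixDensity π0 β0 σ0 (x i) (y i) := fun i =>
    Finset.sum_pos (fun j _ => mul_pos (hπ0 j) (gaussPdf_pos (hσ0 j)))
      Finset.univ_nonempty
  have hπ1pos : ∀ j, 0 < π1 j := by
    intro j; rw [hπ1 j]; exact div_pos (hrpos j) hnpos
  have hf1pos : ∀ i, 0 < mixDensity π1 β1 σ1 (x i) (y i) := fun i =>
    Finset.sum_pos (fun j _ => mul_pos (hπ1pos j) (gaussPdf_pos (hσ1pos j)))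
      Finset.univ_nonempty
  have hrpos' : ∀ i j, 0 < r i j := by
    intro i j; rw [hr i j]
    exact div_pos (mul_pos (hπ0 j) (gaussPdf_pos (hσ0 j))) (hf0pos i)
  have hrsum1 : ∀ i, ∑ j, r i j = 1 := by
    intro i
    have h1 : ∑ j, r i j =
        (∑ j, π0 j * gaussPdf (y i) (∑ k, x i k * β0 j k) (σ0 j)) /
          mixDensity π0 β0 σ0 (x i) (y i) := by
      rw [Finset.sum_div]; exact Finset.sum_congr rfl fun j _ => hr i j
    rw [h1]
    exact div_self (hf0pos i).ne'
  have hπ1sum : ∑ j, π1 j = 1 := by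
    have h1 : ∑ j, π1 j = (∑ j, ∑ i, r i j) / n := by
      rw [Finset.sum_div]; exact Finset.sum_congr rfl fun j _ => hπ1 j
    rw [h1, Finset.sum_comm]
    have h2 : ∑ i : Fin n, ∑ j, r i j = (n : ℝ) := by
      rw [Finset.sum_congr rfl fun i _ => hrsum1 i]
      simp
    rw [h2]; exact div_self hnpos.ne'
  -- Jensen's inequality for each observation
  have key : ∀ i,
      ∑ j, r i j *
        (Real.log (π1 j * gaussPdf (y i) (∑ k, x i k * β1 j k) (σ1 j)) -
          Real.log (π0 j * gaussPdf (y i) (∑ k, x i k * β0 j k) (σ0 j))) ≤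
      Real.log (mixDensity π1 β1 σ1 (x i) (y i)) -
        Real.log (mixDensity π0 β0 σ0 (x i) (y i)) := by
    intro i
    have hg0 : ∀ j, 0 < π0 j * gaussPdf (y i) (∑ k, x i k * β0 j k) (σ0 j) :=
      fun j => mul_pos (hπ0 j) (gaussPdf_pos (hσ0 j))
    have hg1 : ∀ j, 0 < π1 j * gaussPdf (y i) (∑ k, x i k * β1 j k) (σ1 j) :=
      fun j => mul_pos (hπ1pos j) (gaussPdf_pos (hσ1pos j))
    have htpos : ∀ j, 0 <
        (π1 j * gaussPdf (y i) (∑ k, x i k * β1 j k) (σ1 j)) /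
          (π0 j * gaussPdf (y i) (∑ k, x i k * β0 j k) (σ0 j)) :=
      fun j => div_pos (hg1 j) (hg0 j)
    have hj := jensen_log (fun j => r i j)
      (fun j => (π1 j * gaussPdf (y i) (∑ k, x i k * β1 j k) (σ1 j)) /
        (π0 j * gaussPdf (y i) (∑ k, x i k * β0 j k) (σ0 j)))
      (fun j => (hrpos' i j).le) (hrsum1 i) htpos
    have hsum_t : ∑ j, r i j *
        ((π1 j * gaussPdf (y i) (∑ k, x i k * β1 j k) (σ1 j)) /
          (π0 j * gaussPdf (y i) (∑ k, x i k * β0 j k) (σ0 j))) =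
        mixDensity π1 β1 σ1 (x i) (y i) / mixDensity π0 β0 σ0 (x i) (y i) := by
      have hmd : mixDensity π1 β1 σ1 (x i) (y i) =
          ∑ j, π1 j * gaussPdf (y i) (∑ k, x i k * β1 j k) (σ1 j) := rfl
      rw [hmd, Finset.sum_div]
      refine Finset.sum_congr rfl fun j _ => ?_
      rw [hr i j]
      field_simp [(hπ0 j).ne', (gaussPdf_pos (hσ0 j)).ne', (hf0pos i).ne']
    calc ∑ j, r i j *
        (Real.log (π1 j * gaussPdf (y i) (∑ k, x i k * β1 j k) (σ1 j)) -
          Real.log (π0 j * gaussPdf (y i) (∑ k, x i k * β0 j k) (σ0 j)))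
        = ∑ j, r i j * Real.log
            ((π1 j * gaussPdf (y i) (∑ k, x i k * β1 j k) (σ1 j)) /
              (π0 j * gaussPdf (y i) (∑ k, x i k * β0 j k) (σ0 j))) := by
          refine Finset.sum_congr rfl fun j _ => ?_
          rw [Real.log_div (hg1 j).ne' (hg0 j).ne']
      _ ≤ Real.log (∑ j, r i j *
            ((π1 j * gaussPdf (y i) (∑ k, x i k * β1 j k) (σ1 j)) /
              (π0 j * gaussPdf (y i) (∑ k, x i k * β0 j k) (σ0 j)))) := hj
      _ = Real.log (mixDensity π1 β1 σ1 (x i) (y i) /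
            mixDensity π0 β0 σ0 (x i) (y i)) := by rw [hsum_t]
      _ = Real.log (mixDensity π1 β1 σ1 (x i) (y i)) -
            Real.log (mixDensity π0 β0 σ0 (x i) (y i)) :=
          Real.log_div (hf1pos i).ne' (hf0pos i).ne'
  have main_ineq :
      ∑ i, ∑ j, r i j *
        (Real.log (π1 j * gaussPdf (y i) (∑ k, x i k * β1 j k) (σ1 j)) -
          Real.log (π0 j * gaussPdf (y i) (∑ k, x i k * β0 j k) (σ0 j))) ≤
      loglik x y π1 β1 σ1 - loglik x y π0 β0 σ0 := by
    unfold loglik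
    rw [← Finset.sum_sub_distrib]
    exact Finset.sum_le_sum fun i _ => key i
  have split : ∑ i, ∑ j, r i j *
        (Real.log (π1 j * gaussPdf (y i) (∑ k, x i k * β1 j k) (σ1 j)) -
          Real.log (π0 j * gaussPdf (y i) (∑ k, x i k * β0 j k) (σ0 j))) =
      (∑ j, (∑ i, r i j) * (Real.log (π1 j) - Real.log (π0 j))) +
      ((∑ j, ∑ i, r i j *
          Real.log (gaussPdf (y i) (∑ k, x i k * β1 j k) (σ1 j))) -
        (∑ j, ∑ i, r i j *
          Real.log (gaussPdf (y i) (∑ k, x i k * β0 j k) (σ0 j)))) := by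
    rw [Finset.sum_comm]
    have h1 : ∀ j, ∑ i, r i j *
        (Real.log (π1 j * gaussPdf (y i) (∑ k, x i k * β1 j k) (σ1 j)) -
          Real.log (π0 j * gaussPdf (y i) (∑ k, x i k * β0 j k) (σ0 j))) =
        (∑ i, r i j) * (Real.log (π1 j) - Real.log (π0 j)) +
        (∑ i, r i j * Real.log (gaussPdf (y i) (∑ k, x i k * β1 j k) (σ1 j)) -
          ∑ i, r i j * Real.log (gaussPdf (y i) (∑ k, x i k * β0 j k) (σ0 j))) := by
      intro j
      rw [Finset.sum_mul, ← Finset.sum_sub_distrib, ← Finset.sum_add_distrib]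
      refine Finset.sum_congr rfl fun i _ => ?_
      rw [Real.log_mul (hπ1pos j).ne' (gaussPdf_pos (hσ1pos j)).ne',
          Real.log_mul (hπ0 j).ne' (gaussPdf_pos (hσ0 j)).ne']
      ring
    rw [Finset.sum_congr rfl fun j _ => h1 j, Finset.sum_add_distrib,
        Finset.sum_sub_distrib]
  have hTπ : 0 ≤ ∑ j, (∑ i, r i j) * (Real.log (π1 j) - Real.log (π0 j)) := by
    have hkl := kl_aux π1 π0 hπ1pos hπ0 (by rw [hπ0sum, hπ1sum])
    have hnr : ∀ j, (∑ i, r i j) = (n : ℝ) * π1 j := by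
      intro j; rw [hπ1 j]; field_simp
    have h2 : ∑ j, (∑ i, r i j) * (Real.log (π1 j) - Real.log (π0 j)) =
        (n : ℝ) * -(∑ j, π1 j * (Real.log (π0 j) - Real.log (π1 j))) := by
      rw [← Finset.sum_neg_distrib, Finset.mul_sum]
      refine Finset.sum_congr rfl fun j _ => ?_
      rw [hnr j]; ring
    rw [h2]
    have h3 : 0 ≤ -(∑ j, π1 j * (Real.log (π0 j) - Real.log (π1 j))) := by linarith
    exact mul_nonneg hnpos.le h3
  have hcomp : ∀ j,
      ∑ i, r i j * Real.log (gaussPdf (y i) (∑ k, x i k * β0 j k) (σ0 j)) -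
        ∑ k : Fin p, ρ j |β0 j k.succ| ≤
      ∑ i, r i j * Real.log (gaussPdf (y i) (∑ k, x i k * β1 j k) (σ1 j)) -
        ∑ k : Fin p, ρ j |β1 j k.succ| := by
    intro j
    have s1 := hβ1 j
    have s2 : ∑ k : Fin p, lqa (ρ j) (β0 j k.succ) (β0 j k.succ) =
        ∑ k : Fin p, ρ j |β0 j k.succ| :=
      Finset.sum_congr rfl fun k _ => lqa_self (ρ j) _
    have s3 : ∑ k : Fin p, ρ j |β1 j k.succ| ≤
        ∑ k : Fin p, lqa (ρ j) (β1 j k.succ) (β0 j k.succ) :=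
      Finset.sum_le_sum fun k _ =>
        rho_le_lqa (ρ j) (hρmono j) (hρconc j) (hρdiff j) (hβ0 j k)
    have s4 : ∑ i, r i j * Real.log (gaussPdf (y i) (∑ k, x i k * β1 j k) (σ0 j)) ≤
        ∑ i, r i j * Real.log (gaussPdf (y i) (∑ k, x i k * β1 j k) (σ1 j)) :=
      sigma_step (fun i => r i j) y (fun i => ∑ k, x i k * β1 j k) (σ0 j) (σ1 j)
        (hσ0 j) (hσ1pos j) (hrpos j) (hσ1 j)
    linarith [s1]
  have hTφ : (∑ j, ∑ k : Fin p, ρ j |β1 j k.succ|) -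
        (∑ j, ∑ k : Fin p, ρ j |β0 j k.succ|) ≤
      (∑ j, ∑ i, r i j * Real.log (gaussPdf (y i) (∑ k, x i k * β1 j k) (σ1 j))) -
        (∑ j, ∑ i, r i j * Real.log (gaussPdf (y i) (∑ k, x i k * β0 j k) (σ0 j))) := by
    have h := Finset.sum_le_sum fun j (_ : j ∈ Finset.univ) => hcomp j
    rw [Finset.sum_sub_distrib, Finset.sum_sub_distrib] at h
    linarith
  rw [split] at main_ineq
  unfold penLoglik
  linarith
end

section
/- (Local quadratic approximation majorizes the penalty.) Let ρ : [0,∞) → ℝ be nondecreasing, concave and differentiable on (0,∞), and continuous at 0. Let b₀ ∈ ℝ with b₀ ≠ 0. Then for every b ∈ ℝ, ρ(|b|) ≤ ρ(|b₀|) + (ρ'(|b₀|)/(2|b₀|)) (b² − b₀²), with equality when |b| = |b₀|. -/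
/-- The local quadratic approximation majorizes the penalty.
If `ρ : [0,∞) → ℝ` is nondecreasing, concave and differentiable on `(0,∞)`,
and continuous at `0`, then for any `b₀ ≠ 0` and every `b`,
`ρ |b| ≤ ρ |b₀| + (ρ'(|b₀|)/(2|b₀|)) (b² − b₀²)`, with equality when `|b| = |b₀|`. -/
theorem lqa_majorizes_penalty (ρ : ℝ → ℝ)
    (hmono : MonotoneOn ρ (Set.Ici (0:ℝ)))
    (hconc : ConcaveOn ℝ (Set.Ioi (0:ℝ)) ρ)
    (hdiff : ∀ s : ℝ, 0 < s → DifferentiableAt ℝ ρ s)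
    (hcont : ContinuousWithinAt ρ (Set.Ici (0:ℝ)) 0)
    (b₀ : ℝ) (hb₀ : b₀ ≠ 0) :
    (∀ b : ℝ, ρ |b| ≤ ρ |b₀| + deriv ρ |b₀| / (2 * |b₀|) * (b ^ 2 - b₀ ^ 2)) ∧
    (∀ b : ℝ, |b| = |b₀| →
      ρ |b| = ρ |b₀| + deriv ρ |b₀| / (2 * |b₀|) * (b ^ 2 - b₀ ^ 2)) := by
  set s₀ : ℝ := |b₀| with hs₀def
  have hs₀ : 0 < s₀ := abs_pos.mpr hb₀
  set d : ℝ := deriv ρ s₀ with hddef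
  -- derivative is nonnegative
  have hd : 0 ≤ d := by
    have h1 : slope ρ s₀ (s₀ + 1) ≤ d :=
      hconc.slope_le_deriv hs₀ (by simp [Set.mem_Ioi]; linarith) (by linarith)
        (hdiff s₀ hs₀)
    have h2 : (0:ℝ) ≤ slope ρ s₀ (s₀ + 1) := by
      rw [slope_def_field, div_nonneg_iff]
      left
      constructor
      · have := hmono (Set.mem_Ici.mpr hs₀.le) (Set.mem_Ici.mpr (by linarith : (0:ℝ) ≤ s₀ + 1))
          (by linarith)
        linarith
      · linarith
    linarith
  -- tangent line majorization on (0,∞)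
  have tangent : ∀ s : ℝ, 0 < s → ρ s ≤ ρ s₀ + d * (s - s₀) := by
    intro s hs
    rcases lt_trichotomy s s₀ with h | h | h
    · have := hconc.deriv_le_slope (Set.mem_Ioi.mpr hs) (Set.mem_Ioi.mpr hs₀) h
        (hdiff s₀ hs₀)
      rw [slope_def_field, le_div_iff₀ (by linarith)] at this
      nlinarith
    · simp [h]
    · have := hconc.slope_le_deriv (Set.mem_Ioi.mpr hs₀) (Set.mem_Ioi.mpr hs) h
        (hdiff s₀ hs₀)
      rw [slope_def_field, div_le_iff₀ (by linarith)] at this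
      nlinarith
  have key : ∀ b : ℝ, ρ |b| ≤ ρ s₀ + d / (2 * s₀) * (b ^ 2 - b₀ ^ 2) := by
    intro b
    have hb2 : b ^ 2 = |b| ^ 2 := (sq_abs b).symm
    have hb02 : b₀ ^ 2 = s₀ ^ 2 := (sq_abs b₀).symm
    rcases eq_or_lt_of_le (abs_nonneg b) with h0 | h0
    · -- b = 0
      have h1 : ρ |b| ≤ ρ (s₀ / 2) := by
        rw [← h0]
        exact hmono (Set.mem_Ici.mpr le_rfl) (Set.mem_Ici.mpr (by linarith)) (by linarith)
      have h2 : ρ (s₀ / 2) ≤ ρ s₀ + d * (s₀ / 2 - s₀) := tangent _ (by linarith)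
      have hb0 : b ^ 2 = 0 := by rw [hb2, ← h0]; ring
      rw [hb0, hb02]
      have : d / (2 * s₀) * (0 - s₀ ^ 2) = d * (s₀ / 2 - s₀) := by
        field_simp; ring
      rw [this]; linarith
    · -- |b| > 0
      have h1 : ρ |b| ≤ ρ s₀ + d * (|b| - s₀) := tangent _ h0
      have h2 : d * (|b| - s₀) ≤ d / (2 * s₀) * (b ^ 2 - b₀ ^ 2) := by
        rw [hb2, hb02, div_mul_eq_mul_div, le_div_iff₀ (by linarith)]
        nlinarith [sq_nonneg (|b| - s₀)]
      linarith
  refine ⟨key, fun b hb => ?_⟩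
  have : b ^ 2 - b₀ ^ 2 = 0 := by
    rw [← sq_abs b, ← sq_abs b₀, hb]; ring
  rw [hb, this]; ring
end

section
/- (One iteration of the FAST-TLE scheme does not decrease the trimmed penalized objective.) Let k ≤ n, let θ⁰ and θ¹ be parameters for the m-component mixture of linear regressions (each with strictly positive mixing proportions summing to 1 and strictly positive scales), let P : θ ↦ P(θ) ∈ ℝ be any penalty functional, and let I be a subset of {1,…,n} of cardinality k. Suppose: (i) ∑_{i∈I} log f(y_i|x_i, θ¹) − P(θ¹) ≥ ∑_{i∈I} log f(y_i|x_i, θ⁰) − P(θ⁰) (the estimation step on the retained data does not decrease the penalized likelihood), and (ii) I' is a subset of {1,…,n} of cardinality k such that log f(y_i|x_i, θ¹) ≥ log f(y_{i'}|x_{i'}, θ¹) for every i ∈ I' and i' ∉ I' (the concentration step keeps the k observations with largest fitted densities under θ¹). Then ∑_{i∈I'} log f(y_i|x_i, θ¹) − P(θ¹) ≥ ∑_{i∈I} log f(y_i|x_i, θ⁰) − P(θ⁰). -/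
open scoped BigOperators

/-- One iteration of the FAST-TLE scheme (estimation step on the
retained subset `I`, followed by a concentration step selecting `I'`) does not
decrease the trimmed penalized objective. -/
theorem fast_tle_iteration_monotone
    (n m p : ℕ) (hn : 0 < n) (hm : 0 < m) (hp : 0 < p) (k : ℕ) (hk : k ≤ n)
    (x : Fin n → Fin (p + 1) → ℝ) (y : Fin n → ℝ)
    (P : (Fin m → ℝ) → (Fin m → Fin (p + 1) → ℝ) → (Fin m → ℝ) → ℝ)
    (π0 : Fin m → ℝ) (β0 : Fin m → Fin (p + 1) → ℝ) (σ0 : Fin m → ℝ)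
    (hπ0 : ∀ j, 0 < π0 j) (hπ0sum : ∑ j, π0 j = 1) (hσ0 : ∀ j, 0 < σ0 j)
    (π1 : Fin m → ℝ) (β1 : Fin m → Fin (p + 1) → ℝ) (σ1 : Fin m → ℝ)
    (hπ1 : ∀ j, 0 < π1 j) (hπ1sum : ∑ j, π1 j = 1) (hσ1 : ∀ j, 0 < σ1 j)
    (I : Finset (Fin n)) (hIcard : I.card = k)
    -- (i) the estimation step on the retained data does not decrease the
    -- penalized likelihood:
    (hEst : ∑ i ∈ I, Real.log (mixDensity π1 β1 σ1 (x i) (y i)) - P π1 β1 σ1 ≥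
      ∑ i ∈ I, Real.log (mixDensity π0 β0 σ0 (x i) (y i)) - P π0 β0 σ0)
    (I' : Finset (Fin n)) (hI'card : I'.card = k)
    -- (ii) the concentration step keeps the k observations with the largest
    -- fitted densities under θ¹:
    (hConc : ∀ i ∈ I', ∀ i' ∉ I',
      Real.log (mixDensity π1 β1 σ1 (x i) (y i)) ≥
        Real.log (mixDensity π1 β1 σ1 (x i') (y i'))) :
    ∑ i ∈ I', Real.log (mixDensity π1 β1 σ1 (x i) (y i)) - P π1 β1 σ1 ≥
      ∑ i ∈ I, Real.log (mixDensity π0 β0 σ0 (x i) (y i)) - P π0 β0 σ0 := by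
  
  classical
  set g : Fin n → ℝ := fun i => Real.log (mixDensity π1 β1 σ1 (x i) (y i)) with hg
  have hcard : (I \ I').card = (I' \ I).card := by
    have h1 := Finset.card_sdiff_add_card_inter I I'
    have h2 := Finset.card_sdiff_add_card_inter I' I
    rw [Finset.inter_comm] at h2
    omega
  have hsd : ∑ b ∈ I \ I', g b ≤ ∑ a ∈ I' \ I, g a := by
    let e := Finset.equivOfCardEq hcard
    have h1 : ∑ b ∈ I \ I', g b = ∑ b : (I \ I' : Finset (Fin n)), g b :=
      (Finset.sum_coe_sort _ _).symm
    have h2 : ∑ a ∈ I' \ I, g a = ∑ a : (I' \ I : Finset (Fin n)), g a :=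
      (Finset.sum_coe_sort _ _).symm
    have h3 : ∑ b : (I \ I' : Finset (Fin n)), g (e b) =
        ∑ a : (I' \ I : Finset (Fin n)), g a :=
      Fintype.sum_equiv e _ _ (fun b => rfl)
    rw [h1, h2, ← h3]
    refine Finset.sum_le_sum fun b _ => ?_
    have hb : (b : Fin n) ∈ I \ I' := b.2
    have heb : ((e b : _) : Fin n) ∈ I' \ I := (e b).2
    exact hConc _ (Finset.mem_sdiff.mp heb).1 _ (Finset.mem_sdiff.mp hb).2
  have hsum : ∑ i ∈ I, g i ≤ ∑ i ∈ I', g i := by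
    rw [← Finset.sum_inter_add_sum_sdiff I I' g, ← Finset.sum_inter_add_sum_sdiff I' I g,
      Finset.inter_comm]
    linarith
  have := hEst
  simp only [← hg] at *
  linarith
end
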